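/- For every log trace e : List E and process run f : List F there exists an alignment γ of e and f whose cost attains the edit distance: κ(γ) = δ(e, f). (This is the reconstruction of an optimal alignment from the dynamic-programming distance matrix.) -/

import Mathlib

variable {E F : Type*}

/-- Edit distance (head recursion, applied to reversed lists to match the
snoc-based recursive definition). -/
noncomputable def editAux (PL : E → ℕ∞) (PM : F → ℕ∞) (Peq : E → F → ℕ∞) : List E → List F → ℕ∞
  | [], [] => 0
  | a :: e, [] => PL a + editAux PL PM Peq e []
  | [], b :: f => PM b + editAux PL PM Peq [] f
  | a :: e, b :: f =>
      min (editAux PL PM Peq e f + Peq a b)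
        (min (PL a + editAux PL PM Peq e (b :: f))
             (PM b + editAux PL PM Peq (a :: e) f))
termination_by e f => e.length + f.length

/-- The edit distance `δ`, satisfying
`δ [] [] = 0`, `δ (e ++ [a]) [] = PL a + δ e []`,
`δ [] (f ++ [b]) = PM b + δ [] f`, and
`δ (e ++ [a]) (f ++ [b]) =
  min (δ e f + Peq a b) (min (PL a + δ e (f ++ [b])) (PM b + δ (e ++ [a]) f))`. -/
noncomputable def editDist (PL : E → ℕ∞) (PM : F → ℕ∞) (Peq : E → F → ℕ∞)
    (e : List E) (f : List F) : ℕ∞ :=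
  editAux PL PM Peq e.reverse f.reverse

/-- Projection of a sequence of moves onto the log component. -/
def logProj (γ : List (Option E × Option F)) : List E := γ.filterMap Prod.fst

/-- Projection of a sequence of moves onto the model component. -/
def modelProj (γ : List (Option E × Option F)) : List F := γ.filterMap Prod.snd

/-- `γ` is an alignment of log trace `e` and process run `f`: it consists of
moves (no `(none, none)` pair), its log projection is `e` and its model
projection is `f`. -/
def IsAlignment (γ : List (Option E × Option F)) (e : List E) (f : List F) : Prop :=
  (∀ m ∈ γ, m ≠ ((none : Option E), (none : Option F))) ∧
    logProj γ = e ∧ modelProj γ = f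

/-- Cost of a single move. -/
def moveCost (PL : E → ℕ∞) (PM : F → ℕ∞) (Peq : E → F → ℕ∞) :
    Option E × Option F → ℕ∞
  | (some a, none) => PL a
  | (none, some b) => PM b
  | (some a, some b) => Peq a b
  | (none, none) => 0

/-- Cost `κ` of an alignment: the sum of the costs of its moves. -/
def alignCost (PL : E → ℕ∞) (PM : F → ℕ∞) (Peq : E → F → ℕ∞)
    (γ : List (Option E × Option F)) : ℕ∞ :=
  (γ.map (moveCost PL PM Peq)).sum

/-! A minimum of finitely many values is one of them, and each term in the minimum defining `δ`
is the cost of an alignment: prepend the corresponding move to an alignment realising the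
smaller distance. Induction along the recursion of `editAux` thus gives an optimal alignment of
the reversed lists, and reversing it gives one of `e` and `f`. -/

theorem logProj_cons (m : Option E × Option F) (γ : List (Option E × Option F)) :
    logProj (m :: γ) = m.1.toList ++ logProj γ := by
  obtain ⟨_ | a, b⟩ := m <;> rfl

theorem modelProj_cons (m : Option E × Option F) (γ : List (Option E × Option F)) :
    modelProj (m :: γ) = m.2.toList ++ modelProj γ := by
  obtain ⟨a, _ | b⟩ := m <;> rfl

theorem IsAlignment.cons {γ : List (Option E × Option F)} {e : List E} {f : List F}
    (h : IsAlignment γ e f) {m : Option E × Option F} (hm : m ≠ (none, none)) :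
    IsAlignment (m :: γ) (m.1.toList ++ e) (m.2.toList ++ f) := by
  obtain ⟨hmoves, rfl, rfl⟩ := h
  exact ⟨List.forall_mem_cons.2 ⟨hm, hmoves⟩, logProj_cons .., modelProj_cons ..⟩

theorem IsAlignment.reverse {γ : List (Option E × Option F)} {e : List E} {f : List F}
    (h : IsAlignment γ e f) : IsAlignment γ.reverse e.reverse f.reverse := by
  obtain ⟨hmoves, rfl, rfl⟩ := h
  exact ⟨fun m hm => hmoves m (List.mem_reverse.mp hm),
    List.filterMap_reverse .., List.filterMap_reverse ..⟩

section Optimal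

variable (PL : E → ℕ∞) (PM : F → ℕ∞) (Peq : E → F → ℕ∞)

theorem alignCost_cons (m : Option E × Option F) (γ : List (Option E × Option F)) :
    alignCost PL PM Peq (m :: γ) = moveCost PL PM Peq m + alignCost PL PM Peq γ :=
  List.sum_cons

theorem alignCost_reverse (γ : List (Option E × Option F)) :
    alignCost PL PM Peq γ.reverse = alignCost PL PM Peq γ := by
  rw [alignCost, List.map_reverse, List.sum_reverse, alignCost]

def IsAlignmentCost (e : List E) (f : List F) (c : ℕ∞) : Prop :=
  ∃ γ, IsAlignment γ e f ∧ alignCost PL PM Peq γ = c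

variable {PL PM Peq}

theorem isAlignmentCost_nil : IsAlignmentCost PL PM Peq [] [] 0 :=
  ⟨[], ⟨by simp, rfl, rfl⟩, rfl⟩

theorem IsAlignmentCost.cons {e : List E} {f : List F} {c : ℕ∞}
    (h : IsAlignmentCost PL PM Peq e f c) {m : Option E × Option F} (hm : m ≠ (none, none)) :
    IsAlignmentCost PL PM Peq (m.1.toList ++ e) (m.2.toList ++ f) (moveCost PL PM Peq m + c) := by
  obtain ⟨γ, hγ, rfl⟩ := h
  exact ⟨m :: γ, hγ.cons hm, alignCost_cons ..⟩

theorem isAlignmentCost_editAux : ∀ (e : List E) (f : List F),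
    IsAlignmentCost PL PM Peq e f (editAux PL PM Peq e f)
  | [], [] => by rw [editAux]; exact isAlignmentCost_nil
  | a :: e, [] => by
    rw [editAux]
    exact (isAlignmentCost_editAux e []).cons (m := (some a, none)) (by simp)
  | [], b :: f => by
    rw [editAux]
    exact (isAlignmentCost_editAux [] f).cons (m := (none, some b)) (by simp)
  | a :: e, b :: f => by
    have hsync := (isAlignmentCost_editAux e f).cons (m := (some a, some b)) (by simp)
    have hlog := (isAlignmentCost_editAux e (b :: f)).cons (m := (some a, none)) (by simp)
    have hmodel := (isAlignmentCost_editAux (a :: e) f).cons (m := (none, some b)) (by simp)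
    rw [moveCost, add_comm] at hsync
    rw [editAux]
    rcases min_choice (editAux PL PM Peq e f + Peq a b) (min _ _) with h | h <;> rw [h]
    · exact hsync
    · rcases min_choice (PL a + editAux PL PM Peq e (b :: f)) _ with h' | h' <;> rw [h']
      · exact hlog
      · exact hmodel
termination_by e f => e.length + f.length

end Optimal

theorem exists_alignment_cost_eq_editDist
    (PL : E → ℕ∞) (PM : F → ℕ∞) (Peq : E → F → ℕ∞)
    (e : List E) (f : List F) :
    ∃ γ : List (Option E × Option F),
      IsAlignment γ e f ∧ alignCost PL PM Peq γ = editDist PL PM Peq e f := by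
  obtain ⟨γ, hγ, hcost⟩ := isAlignmentCost_editAux (PL := PL) (PM := PM) (Peq := Peq)
    e.reverse f.reverse
  refine ⟨γ.reverse, ?_, ?_⟩
  · simpa only [List.reverse_reverse] using hγ.reverse
  · rw [alignCost_reverse, hcost, editDist]
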